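/- arXiv:2002.08686 — 2 statements merged into one kernel-verified Lean document; each statement's English description precedes it below -/
import Mathlib

section
/- In the free group F_4, each of the six long relators with indices in {1,3,4}, i.e. the set R_{1,3,4} corresponding to the relations λ_{1,3}λ_{1,4}λ_{3,4}=λ_{3,4}λ_{1,4}λ_{1,3}, λ_{3,1}λ_{3,4}λ_{1,4}=λ_{1,4}λ_{3,4}λ_{3,1}, λ_{1,4}λ_{1,3}λ_{4,3}=λ_{4,3}λ_{1,3}λ_{1,4}, λ_{4,1}λ_{4,3}λ_{1,3}=λ_{1,3}λ_{4,3}λ_{4,1}, λ_{3,4}λ_{3,1}λ_{4,1}=λ_{4,1}λ_{3,1}λ_{3,4}, λ_{4,3}λ_{4,1}λ_{3,1}=λ_{3,1}λ_{4,1}λ_{4,3}, lies in the normal closure of R^V(3) ∪ S_1(R^V(3)) ∪ S_2(R^V(3)) ∪ CR(4), where R^V(3) ⊆ F_4 via the canonical inclusion F_3 → F_4. -/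
/-- The ambient free group with generators `λ i j` indexed by ordered pairs of naturals;
the sub-free-group `F_m` is spanned by the generators `lam i j` with `1 ≤ i ≠ j ≤ m`,
and the canonical inclusion `F_m → F_{m'}` is the identity on generators. -/
abbrev FG : Type := FreeGroup (ℕ × ℕ)

/-- The generator `λ_{i,j}`. -/
def lam (i j : ℕ) : FG := FreeGroup.of (i, j)

/-- The commutativity relators `λ_{i,j} λ_{k,l} λ_{i,j}⁻¹ λ_{k,l}⁻¹` of `VP_m`,
for pairwise distinct indices `1 ≤ i, j, k, l ≤ m`. -/
def CR (m : ℕ) : Set FG :=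
  {w | ∃ i j k l : ℕ,
    1 ≤ i ∧ i ≤ m ∧ 1 ≤ j ∧ j ≤ m ∧ 1 ≤ k ∧ k ≤ m ∧ 1 ≤ l ∧ l ≤ m ∧
    i ≠ j ∧ i ≠ k ∧ i ≠ l ∧ j ≠ k ∧ j ≠ l ∧ k ≠ l ∧
    w = lam i j * lam k l * (lam i j)⁻¹ * (lam k l)⁻¹}

/-- The long relators `λ_{k,i} λ_{k,j} λ_{i,j} λ_{k,i}⁻¹ λ_{k,j}⁻¹ λ_{i,j}⁻¹` of `VP_m`,
for pairwise distinct indices `1 ≤ i, j, k ≤ m`. -/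
def LongR (m : ℕ) : Set FG :=
  {w | ∃ i j k : ℕ,
    1 ≤ i ∧ i ≤ m ∧ 1 ≤ j ∧ j ≤ m ∧ 1 ≤ k ∧ k ≤ m ∧
    i ≠ j ∧ i ≠ k ∧ j ≠ k ∧
    w = lam k i * lam k j * lam i j * (lam k i)⁻¹ * (lam k j)⁻¹ * (lam i j)⁻¹}

/-- The full relator set `R^V(m)` of the virtual pure braid group `VP_m`. -/
def RV (m : ℕ) : Set FG := CR m ∪ LongR m

/-- Value of `S_{i-1}` on a generator, given by the displayed case formulas:
for `k < l`, `S_{i-1}(λ_{k,l})` and `S_{i-1}(λ_{l,k})` according to the position of `i`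
relative to `k` and `l`. -/
def Sgen (i : ℕ) (p : ℕ × ℕ) : FG :=
  if p.1 < p.2 then
    -- the generator is `λ_{k,l}` with `k = p.1 < l = p.2`
    if i < p.1 then lam (p.1 + 1) (p.2 + 1)
    else if i = p.1 then lam p.1 (p.2 + 1) * lam (p.1 + 1) (p.2 + 1)
    else if i < p.2 then lam p.1 (p.2 + 1)
    else if i = p.2 then lam p.1 (p.2 + 1) * lam p.1 p.2
    else lam p.1 p.2
  else if p.2 < p.1 then
    -- the generator is `λ_{l,k}` with `k = p.2 < l = p.1`
    if i < p.2 then lam (p.1 + 1) (p.2 + 1)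
    else if i = p.2 then lam (p.1 + 1) (p.2 + 1) * lam (p.1 + 1) p.2
    else if i < p.1 then lam (p.1 + 1) p.2
    else if i = p.1 then lam p.1 p.2 * lam (p.1 + 1) p.2
    else lam p.1 p.2
  else lam p.1 p.2

/-- The free-group homomorphism `S_t = S_{(t+1)-1} : F_m → F_{m+1}` (doubling the
`(t+1)`-st strand), determined on generators by the displayed case formulas. -/
def Smap (t : ℕ) : FG →* FG := FreeGroup.lift (Sgen (t + 1))

/-- The relator `u * v⁻¹` of a relation `u = v`. -/
def relOf (u v : FG) : FG := u * v⁻¹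

/-- The set `R_{i,j,k}` of the six long relators with indices in `{i, j, k}`. -/
def Rtriple (i j k : ℕ) : Set FG :=
  {relOf (lam i j * lam i k * lam j k) (lam j k * lam i k * lam i j),
   relOf (lam j i * lam j k * lam i k) (lam i k * lam j k * lam j i),
   relOf (lam i k * lam i j * lam k j) (lam k j * lam i j * lam i k),
   relOf (lam k i * lam k j * lam i j) (lam i j * lam k j * lam k i),
   relOf (lam j k * lam j i * lam k i) (lam k i * lam j i * lam j k),
   relOf (lam k j * lam k i * lam j i) (lam j i * lam k i * lam k j)}

/-- The commutator `[a,b] = a⁻¹ b⁻¹ a b`. -/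
def commE (a b : FG) : FG := a⁻¹ * b⁻¹ * a * b

/-- The automorphism of the free group induced by a permutation of the indices:
`λ_{i,j} ↦ λ_{σ(i),σ(j)}`. -/
def permF (σ : Equiv.Perm ℕ) : FG →* FG :=
  FreeGroup.lift (fun p => lam (σ p.1) (σ p.2))


/-!
In any quotient of the free group in which the relators vanish, write `a s t` for the image
of `λ_{s,t}`. The map `S_{c-1}` cables strand `c` into the strands `c, c + 1`. If `a`
satisfies a long relation on a triple containing `c`, and also its cabled version, then
cancelling the old relation against the cabled one, using the commutation relations of
disjoint pairs, leaves the long relation with `c` replaced by `c + 1`. Applied to `S_2`,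
this moves the long relations from `{1, 2, 3}` to `{1, 2, 4}`; the `S_1`-images of the
relations on `{1, 2, 3}` are the cabled relations of `{1, 2, 4}` at strand `2`, and the
same step moves them on to `{1, 3, 4}`.
-/

section LongRelation

variable {ι G H : Type*} [Group G] [Group H]

def LongRel (b : ι → ι → G) (i j k : ι) : Prop :=
  b k i * b k j * b i j = b i j * b k j * b k i

/-- The images of the generators when strand `c` is cabled into the two strands `c, d`:
`λ_{s,c} ↦ λ_{s,d} λ_{s,c}` and `λ_{c,t} ↦ λ_{c,t} λ_{d,t}`. -/
def doubleStrand [DecidableEq ι] (b : ι → ι → G) (c d s t : ι) : G :=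
  if t = c then b s d * b s c else if s = c then b c t * b d t else b s t

theorem map_doubleStrand [DecidableEq ι] (f : G →* H) (b : ι → ι → G) (c d s t : ι) :
    f (doubleStrand b c d s t) = doubleStrand (fun s t => f (b s t)) c d s t := by
  unfold doubleStrand
  split_ifs <;> simp only [map_mul]

def PairsCommute (b : ι → ι → G) (S : Set ι) : Prop :=
  ∀ ⦃s t u v⦄, s ∈ S → t ∈ S → u ∈ S → v ∈ S →
    s ≠ t → s ≠ u → s ≠ v → t ≠ u → t ≠ v → u ≠ v → Commute (b s t) (b u v)

variable {b : ι → ι → G} {i j k d : ι}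

theorem LongRel.of_doubleStrand_third [DecidableEq ι] (hik : i ≠ k) (hjk : j ≠ k)
    (hL : LongRel b i j k) (hD : LongRel (doubleStrand b k d) i j k)
    (h₁ : Commute (b d i) (b k j)) (h₂ : Commute (b k i) (b d j)) :
    LongRel b i j d := by
  simp only [LongRel, doubleStrand, if_neg hik, if_neg hjk, if_true] at hL hD ⊢
  refine mul_left_cancel (a := b k i * b k j) ?_
  calc b k i * b k j * (b d i * b d j * b i j)
      = b k i * b d i * (b k j * b d j) * b i j := by
        simp only [mul_assoc, h₁.left_comm]
    _ = b i j * (b k j * b d j) * (b k i * b d i) := hD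
    _ = b i j * b k j * b k i * (b d j * b d i) := by
        simp only [mul_assoc, h₂.symm.left_comm]
    _ = b k i * b k j * (b i j * b d j * b d i) := by
        rw [← hL]; simp only [mul_assoc]

theorem LongRel.of_doubleStrand_first [DecidableEq ι] (hij : i ≠ j) (hik : i ≠ k)
    (hL : LongRel b i j k) (hD : LongRel (doubleStrand b i d) i j k)
    (h₁ : Commute (b k i) (b d j)) (h₂ : Commute (b k d) (b i j)) :
    LongRel b d j k := by
  simp only [LongRel, doubleStrand, if_neg hik.symm, if_neg hij.symm, if_true] at hL hD ⊢
  refine mul_right_cancel (b := b k i) (mul_left_cancel (a := b i j) ?_)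
  calc b i j * (b k d * b k j * b d j * b k i)
      = b k d * (b i j * b k j * b k i) * b d j := by
        simp only [mul_assoc, h₁.eq, h₂.symm.left_comm]
    _ = b k d * b k i * b k j * (b i j * b d j) := by
        rw [← hL]; simp only [mul_assoc]
    _ = b i j * b d j * b k j * (b k d * b k i) := hD
    _ = b i j * (b d j * b k j * b k d * b k i) := by simp only [mul_assoc]

theorem LongRel.of_doubleStrand_second [DecidableEq ι] (hij : i ≠ j) (hjk : j ≠ k)
    (hL : LongRel b i j k) (hD : LongRel (doubleStrand b j d) i j k)
    (h₁ : Commute (b k j) (b i d)) (h₂ : Commute (b i j) (b k d)) :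
    LongRel b i d k := by
  simp only [LongRel, doubleStrand, if_neg hij, if_neg hjk.symm, if_true] at hL hD ⊢
  refine mul_right_cancel (b := b k j * b i j) ?_
  calc b k i * b k d * b i d * (b k j * b i j)
      = b k i * (b k d * b k j) * (b i d * b i j) := by
        simp only [mul_assoc, h₁.left_comm]
    _ = b i d * b i j * (b k d * b k j) * b k i := hD
    _ = b i d * b k d * (b i j * b k j * b k i) := by
        simp only [mul_assoc, h₂.left_comm]
    _ = b i d * b k d * b k i * (b k j * b i j) := by
        rw [← hL]; simp only [mul_assoc]

theorem LongRel.swap_of_doubleStrand [DecidableEq ι] {S : Set ι} {c : ι}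
    (hb : PairsCommute b S) (hi : i ∈ S) (hj : j ∈ S) (hk : k ∈ S) (hd : d ∈ S)
    (hij : i ≠ j) (hik : i ≠ k) (hjk : j ≠ k) (hdi : d ≠ i) (hdj : d ≠ j) (hdk : d ≠ k)
    (hc : c = i ∨ c = j ∨ c = k) (hL : LongRel b i j k)
    (hD : LongRel (doubleStrand b c d) i j k) :
    LongRel b (Equiv.swap c d i) (Equiv.swap c d j) (Equiv.swap c d k) := by
  rcases hc with rfl | rfl | rfl
  · rw [Equiv.swap_apply_left, Equiv.swap_apply_of_ne_of_ne hij.symm hdj.symm,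
      Equiv.swap_apply_of_ne_of_ne hik.symm hdk.symm]
    exact hL.of_doubleStrand_first hij hik hD
      (hb hk hi hd hj hik.symm hdk.symm hjk.symm hdi.symm hij hdj)
      (hb hk hd hi hj hdk.symm hik.symm hjk.symm hdi hdj hij)
  · rw [Equiv.swap_apply_left, Equiv.swap_apply_of_ne_of_ne hij hdi.symm,
      Equiv.swap_apply_of_ne_of_ne hjk.symm hdk.symm]
    exact hL.of_doubleStrand_second hij hjk hD
      (hb hk hj hi hd hjk.symm hik.symm hdk.symm hij.symm hdj.symm hdi.symm)
      (hb hi hj hk hd hij hik hdi.symm hjk hdj.symm hdk.symm)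
  · rw [Equiv.swap_apply_left, Equiv.swap_apply_of_ne_of_ne hik hdi.symm,
      Equiv.swap_apply_of_ne_of_ne hjk hdj.symm]
    exact hL.of_doubleStrand_third hik hjk hD
      (hb hd hi hk hj hdi hdk hdj hik hij hjk.symm)
      (hb hk hi hd hj hik.symm hdk.symm hjk.symm hdi.symm hij hdj)

end LongRelation

/-- Renumbering of the old strands when strand `c` is doubled into `c, c + 1`. -/
def shiftAbove (c s : ℕ) : ℕ := if s ≤ c then s else s + 1

theorem shiftAbove_of_le {c s : ℕ} (h : s ≤ c) : shiftAbove c s = s := if_pos h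

theorem swap_shiftAbove_succ (c s : ℕ) :
    Equiv.swap (c + 1) (c + 2) (shiftAbove (c + 1) s) = shiftAbove c s := by
  unfold shiftAbove
  rw [Equiv.swap_apply_def]
  split_ifs <;> omega

theorem Smap_lam {t s u : ℕ} (hsu : s ≠ u) :
    Smap t (lam s u) =
      doubleStrand lam (t + 1) (t + 2) (shiftAbove (t + 1) s) (shiftAbove (t + 1) u) := by
  rw [Smap, lam, FreeGroup.lift_apply_of]
  unfold Sgen doubleStrand shiftAbove
  split_ifs <;> first | omega | (subst_vars; rfl)

section Relators

variable {H : Type*} [Group H] (f : FG →* H)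

theorem longRel_of_map_longR_eq_one {m i j k : ℕ} (hf : ∀ w ∈ LongR m, f w = 1)
    (hi : i ∈ Set.Icc 1 m) (hj : j ∈ Set.Icc 1 m) (hk : k ∈ Set.Icc 1 m)
    (hij : i ≠ j) (hik : i ≠ k) (hjk : j ≠ k) :
    LongRel (fun s t => f (lam s t)) i j k := by
  have h := hf _ ⟨i, j, k, hi.1, hi.2, hj.1, hj.2, hk.1, hk.2, hij, hik, hjk, rfl⟩
  rw [LongRel, ← mul_inv_eq_one]
  simpa only [map_mul, map_inv, mul_inv_rev, mul_assoc] using h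

theorem pairsCommute_of_map_CR_eq_one {m : ℕ} (hf : ∀ w ∈ CR m, f w = 1) :
    PairsCommute (fun s t => f (lam s t)) (Set.Icc 1 m) :=
  fun s t u v hs ht hu hv hst hsu hsv htu htv huv => by
    have h := hf _ ⟨s, t, u, v, hs.1, hs.2, ht.1, ht.2, hu.1, hu.2, hv.1, hv.2,
      hst, hsu, hsv, htu, htv, huv, rfl⟩
    rw [← commutatorElement_eq_one_iff_commute, commutatorElement_def]
    simpa only [map_mul, map_inv] using h

theorem longRel_doubleStrand_of_map_Smap_eq_one {m t i j k : ℕ}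
    (hf : ∀ w ∈ LongR m, f (Smap t w) = 1)
    (hi : i ∈ Set.Icc 1 m) (hj : j ∈ Set.Icc 1 m) (hk : k ∈ Set.Icc 1 m)
    (hij : i ≠ j) (hik : i ≠ k) (hjk : j ≠ k) :
    LongRel (doubleStrand (fun s u => f (lam s u)) (t + 1) (t + 2))
      (shiftAbove (t + 1) i) (shiftAbove (t + 1) j) (shiftAbove (t + 1) k) := by
  have h := longRel_of_map_longR_eq_one (f.comp (Smap t)) hf hi hj hk hij hik hjk
  simpa only [LongRel, MonoidHom.comp_apply, Smap_lam hij, Smap_lam hik.symm,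
    Smap_lam hjk.symm, map_doubleStrand] using h

theorem map_relOf_eq_one_of_longRel {i j k : ℕ} (h : LongRel (fun s t => f (lam s t)) i j k) :
    f (relOf (lam k i * lam k j * lam i j) (lam i j * lam k j * lam k i)) = 1 := by
  rw [relOf, map_mul, map_inv, mul_inv_eq_one]
  simp only [map_mul]
  exact h

end Relators

abbrev relators134 : Set FG := RV 3 ∪ Smap 1 '' RV 3 ∪ Smap 2 '' RV 3 ∪ CR 4

section Triple134

variable {H : Type*} [Group H] (f : FG →* H)

theorem longRel_124 (hf : ∀ w ∈ relators134, f w = 1)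
    {i j k : ℕ} (hi : i ∈ Set.Icc 1 3) (hj : j ∈ Set.Icc 1 3) (hk : k ∈ Set.Icc 1 3)
    (hij : i ≠ j) (hik : i ≠ k) (hjk : j ≠ k) :
    LongRel (fun s t => f (lam s t)) (shiftAbove 2 i) (shiftAbove 2 j) (shiftAbove 2 k) := by
  have hL := longRel_of_map_longR_eq_one f
    (fun w hw => hf w (Or.inl (Or.inl (Or.inl (Or.inr hw))))) hi hj hk hij hik hjk
  have hD := longRel_doubleStrand_of_map_Smap_eq_one f (t := 2)
    (fun w hw => hf _ (Or.inl (Or.inr ⟨w, Or.inr hw, rfl⟩))) hi hj hk hij hik hjk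
  rw [shiftAbove_of_le hi.2, shiftAbove_of_le hj.2, shiftAbove_of_le hk.2] at hD
  have hσ : ∀ s ≤ 3, shiftAbove 2 s = Equiv.swap 3 4 s := fun s hs => by
    rw [← (swap_shiftAbove_succ 2 s : Equiv.swap 3 4 (shiftAbove 3 s) = _), shiftAbove_of_le hs]
  rw [hσ i hi.2, hσ j hj.2, hσ k hk.2]
  refine hL.swap_of_doubleStrand
    (pairsCommute_of_map_CR_eq_one f (fun w hw => hf w (Or.inr hw))) ?_ ?_ ?_ ?_ hij hik hjk
    ?_ ?_ ?_ ?_ hD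
  all_goals simp only [Set.mem_Icc] at hi hj hk ⊢; omega

theorem longRel_134 (hf : ∀ w ∈ relators134, f w = 1)
    {i j k : ℕ} (hi : i ∈ Set.Icc 1 3) (hj : j ∈ Set.Icc 1 3) (hk : k ∈ Set.Icc 1 3)
    (hij : i ≠ j) (hik : i ≠ k) (hjk : j ≠ k) :
    LongRel (fun s t => f (lam s t)) (shiftAbove 1 i) (shiftAbove 1 j) (shiftAbove 1 k) := by
  have hD := longRel_doubleStrand_of_map_Smap_eq_one f (t := 1)
    (fun w hw => hf _ (Or.inl (Or.inl (Or.inr ⟨w, Or.inr hw, rfl⟩)))) hi hj hk hij hik hjk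
  rw [← swap_shiftAbove_succ 1 i, ← swap_shiftAbove_succ 1 j, ← swap_shiftAbove_succ 1 k]
  refine (longRel_124 f hf hi hj hk hij hik hjk).swap_of_doubleStrand
    (pairsCommute_of_map_CR_eq_one f (fun w hw => hf w (Or.inr hw)))
    ?_ ?_ ?_ ?_ ?_ ?_ ?_ ?_ ?_ ?_ ?_ hD
  all_goals simp only [Set.mem_Icc, shiftAbove] at hi hj hk ⊢; (try split_ifs) <;> omega

end Triple134

theorem map_eq_one_of_mem_Rtriple_134 {H : Type*} [Group H] (f : FG →* H)
    (hf : ∀ w ∈ relators134, f w = 1) :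
    ∀ w ∈ Rtriple 1 3 4, f w = 1 := by
  intro w hw
  simp only [Rtriple, Set.mem_insert_iff, Set.mem_singleton_iff] at hw
  rcases hw with rfl | rfl | rfl | rfl | rfl | rfl <;> apply map_relOf_eq_one_of_longRel
  · refine longRel_134 f hf (i := 2) (j := 3) (k := 1) ?_ ?_ ?_ ?_ ?_ ?_ <;> norm_num
  · refine longRel_134 f hf (i := 1) (j := 3) (k := 2) ?_ ?_ ?_ ?_ ?_ ?_ <;> norm_num
  · refine longRel_134 f hf (i := 3) (j := 2) (k := 1) ?_ ?_ ?_ ?_ ?_ ?_ <;> norm_num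
  · refine longRel_134 f hf (i := 1) (j := 2) (k := 3) ?_ ?_ ?_ ?_ ?_ ?_ <;> norm_num
  · refine longRel_134 f hf (i := 3) (j := 1) (k := 2) ?_ ?_ ?_ ?_ ?_ ?_ <;> norm_num
  · refine longRel_134 f hf (i := 2) (j := 1) (k := 3) ?_ ?_ ?_ ?_ ?_ ?_ <;> norm_num

/-- each of the six long relators of `R_{1,3,4}` lies in the normal
closure in `F_4` of `R^V(3) ∪ S_1(R^V(3)) ∪ S_2(R^V(3)) ∪ CR(4)`. -/
theorem R134_in_normalClosure :
    Rtriple 1 3 4 ⊆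
      (Subgroup.normalClosure
        (RV 3 ∪ (Smap 1) '' (RV 3) ∪ (Smap 2) '' (RV 3) ∪ CR 4) : Set FG) := by
  intro w hw
  rw [SetLike.mem_coe, ← QuotientGroup.eq_one_iff]
  exact map_eq_one_of_mem_Rtriple_134 (QuotientGroup.mk' _)
    (fun v hv => (QuotientGroup.eq_one_iff v).2 (Subgroup.subset_normalClosure hv)) w hw
end

section
/- In the free group F_5, the four commutators [λ_{1,5},λ_{2,3}], [λ_{1,5},λ_{2,4}], [λ_{1,5},λ_{3,4}], [λ_{2,5},λ_{3,4}] all lie in the normal closure of the set {S_i(λ_{1,4}λ_{2,3}λ_{1,4}^{-1}λ_{2,3}^{-1}) : i = 0,1,2,3} ∪ CR(4), where S_i : F_4 → F_5 and CR(4) ⊆ F_5 via the canonical inclusion F_4 → F_5. -/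
/-- The relator `λ_{1,4} λ_{2,3} λ_{1,4}⁻¹ λ_{2,3}⁻¹` of `F_4`. -/
def r6 : FG := lam 1 4 * lam 2 3 * (lam 1 4)⁻¹ * (lam 2 3)⁻¹

/-- The normal closure in `F_5` of `{S_i(λ_{1,4}λ_{2,3}λ_{1,4}⁻¹λ_{2,3}⁻¹) : i = 0,1,2,3} ∪ CR(4)`. -/
def N6 : Subgroup FG :=
  Subgroup.normalClosure ({Smap 0 r6, Smap 1 r6, Smap 2 r6, Smap 3 r6} ∪ CR 4)

/-!
In the quotient `F ⧸ N6` each relator `S_t(λ₁₄λ₂₃λ₁₄⁻¹λ₂₃⁻¹)` says that `S_t(λ₁₄)` and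
`S_t(λ₂₃)` commute, and these images are products of at most two generators. Starting from
`λ₁₄ λ₂₃ = λ₂₃ λ₁₄` (a relator of `CR(4)`) and taking `t = 3, 2, 1, 0` in turn, each lifted
relation has one factor already known to commute, which can be cancelled.
-/

open QuotientGroup
open scoped commutatorElement

section
variable {G : Type*} [Group G] {a b c : G}

namespace Commute

theorem left_of_mul_left (h : Commute (a * b) c) (hb : Commute b c) : Commute a c := by
  simpa using h.mul_left hb.inv_left

theorem right_of_mul_left (h : Commute (a * b) c) (ha : Commute a c) : Commute b c := by
  simpa using ha.inv_left.mul_left h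

theorem left_of_mul_right (h : Commute a (b * c)) (hc : Commute a c) : Commute a b :=
  (h.symm.left_of_mul_left hc.symm).symm

theorem right_of_mul_right (h : Commute a (b * c)) (hb : Commute a b) : Commute a c :=
  (h.symm.right_of_mul_left hb.symm).symm

end Commute

theorem commutatorElement_mem_iff_commute_mk {N : Subgroup G} [N.Normal] :
    ⁅a, b⁆ ∈ N ↔ Commute (a : G ⧸ N) b := by
  rw [← commutatorElement_eq_one_iff_commute, ← eq_one_iff]
  rfl

end

theorem commE_eq_commutatorElement_inv (a b : FG) : commE a b = ⁅a⁻¹, b⁻¹⁆ := by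
  simp [commE, commutatorElement_def]

theorem commE_mem_iff_commute_mk {N : Subgroup FG} [N.Normal] {a b : FG} :
    commE a b ∈ N ↔ Commute (a : FG ⧸ N) b := by
  rw [commE_eq_commutatorElement_inv, commutatorElement_mem_iff_commute_mk, mk_inv, mk_inv,
    Commute.inv_inv_iff]

instance : N6.Normal := Subgroup.normalClosure_normal

theorem Smap_lam_s6 (t i j : ℕ) : Smap t (lam i j) = Sgen (t + 1) (i, j) :=
  FreeGroup.lift_apply_of

theorem commute_Smap_lam_mod_N6 {t : ℕ} (ht : t ≤ 3) :
    Commute (Smap t (lam 1 4) : FG ⧸ N6) (Smap t (lam 2 3)) := by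
  rw [← commutatorElement_mem_iff_commute_mk, ← map_commutatorElement]
  apply Subgroup.subset_normalClosure
  left
  interval_cases t <;> simp [r6, commutatorElement_def]

theorem comms_from_lifting_14_23 :
    commE (lam 1 5) (lam 2 3) ∈ N6 ∧ commE (lam 1 5) (lam 2 4) ∈ N6 ∧
    commE (lam 1 5) (lam 3 4) ∈ N6 ∧ commE (lam 2 5) (lam 3 4) ∈ N6 := by
  simp only [commE_mem_iff_commute_mk]
  have c14_23 : Commute (lam 1 4 : FG ⧸ N6) (lam 2 3) := by
    rw [← commutatorElement_mem_iff_commute_mk]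
    exact Subgroup.subset_normalClosure (Or.inr ⟨1, 4, 2, 3, by norm_num [commutatorElement_def]⟩)
  have lift0 : Commute (lam 1 5 * lam 2 5 : FG ⧸ N6) (lam 3 4) := by
    simpa [Smap_lam_s6, Sgen] using commute_Smap_lam_mod_N6 (t := 0) (by norm_num)
  have lift1 : Commute (lam 1 5 : FG ⧸ N6) (lam 2 4 * lam 3 4) := by
    simpa [Smap_lam_s6, Sgen] using commute_Smap_lam_mod_N6 (t := 1) (by norm_num)
  have lift2 : Commute (lam 1 5 : FG ⧸ N6) (lam 2 4 * lam 2 3) := by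
    simpa [Smap_lam_s6, Sgen] using commute_Smap_lam_mod_N6 (t := 2) (by norm_num)
  have lift3 : Commute (lam 1 5 * lam 1 4 : FG ⧸ N6) (lam 2 3) := by
    simpa [Smap_lam_s6, Sgen] using commute_Smap_lam_mod_N6 (t := 3) (by norm_num)
  have c15_23 := lift3.left_of_mul_left c14_23
  have c15_24 := lift2.left_of_mul_right c15_23
  have c15_34 := lift1.right_of_mul_right c15_24
  exact ⟨c15_23, c15_24, c15_34, lift0.right_of_mul_left c15_34⟩
end
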